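/- Let (f^t, g^t, y^t, λ^t) be the iterates of PAME with θ ∈ (0,1) and τ := η/(2c_∞²). Then for every t ≥ 0, E(f^{t+1}, g^{t+1}, λ^{t+1}, λ^t) − E(f^{t+1}, g^{t+1}, λ^t, λ^{t−1}) ≥ ((2θ − θ²)/(2τ))‖λ^t − λ^{t−1}‖_2² + (1/(4τ))‖λ^{t+1} − y^{t+1}‖_2², and in particular the right-hand side is nonnegative. -/

import Mathlib

open scoped BigOperators

noncomputable section

namespace EOT

/-- Square matrices as functions. -/
abbrev Mat (n : ℕ) := Fin n → Fin n → ℝ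

/-- Frobenius inner product ⟨A, B⟩ = Σ_{i,j} A_{ij} B_{ij}. -/
def frob {n : ℕ} (A B : Mat n) : ℝ := ∑ i, ∑ j, A i j * B i j

/-- Row-sum vector r(A) = A 𝟙. -/
def rowSum {n : ℕ} (A : Mat n) : Fin n → ℝ := fun i => ∑ j, A i j

/-- Column-sum vector c(A) = Aᵀ 𝟙. -/
def colSum {n : ℕ} (A : Mat n) : Fin n → ℝ := fun j => ∑ i, A i j

/-- Entrywise ℓ₁ norm of a matrix. -/
def mnorm1 {n : ℕ} (A : Mat n) : ℝ := ∑ i, ∑ j, |A i j|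

/-- ℓ₁ norm of a vector. -/
def vnorm1 {m : ℕ} (v : Fin m → ℝ) : ℝ := ∑ i, |v i|

/-- Euclidean (ℓ₂) norm of a vector. -/
def vnorm2 {m : ℕ} (v : Fin m → ℝ) : ℝ := Real.sqrt (∑ i, v i ^ 2)

/-- c_∞ := max_{k,i,j} |C^k_{ij}|. -/
def cinf {n N : ℕ} (C : Fin N → Mat n) : ℝ := ⨆ k, ⨆ i, ⨆ j, |C k i j|

/-- ι := min_j log b_j. -/
def iotaMin {n : ℕ} (b : Fin n → ℝ) : ℝ := ⨅ j, Real.log (b j)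

/-- ζ^k(f,g,λ)_{ij} = exp((f_i + g_j − λ_k C^k_{ij})/η). -/
def zeta {n N : ℕ} (η : ℝ) (C : Fin N → Mat n) (f g : Fin n → ℝ)
    (lam : Fin N → ℝ) (k : Fin N) : Mat n :=
  fun i j => Real.exp ((f i + g j - lam k * C k i j) / η)

/-- π^k(f,g,λ) = ζ^k(f,g,λ) / Σ_{k'} ‖ζ^{k'}(f,g,λ)‖₁. -/
def piMat {n N : ℕ} (η : ℝ) (C : Fin N → Mat n) (f g : Fin n → ℝ)
    (lam : Fin N → ℝ) (k : Fin N) : Mat n :=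
  fun i j => zeta η C f g lam k i j / ∑ k', mnorm1 (zeta η C f g lam k')

/-- The dual objective F(f,g,λ) = ⟨f,a⟩ + ⟨g,b⟩ − η log(Σ_k ‖ζ^k‖₁) − η. -/
def Fdual {n N : ℕ} (η : ℝ) (C : Fin N → Mat n) (a b : Fin n → ℝ)
    (f g : Fin n → ℝ) (lam : Fin N → ℝ) : ℝ :=
  (∑ i, f i * a i) + (∑ j, g j * b j)
    - η * Real.log (∑ k, mnorm1 (zeta η C f g lam k)) - η

/-- Gradient of F with respect to λ: (∇_λ F)_k = ⟨π^k(f,g,λ), C^k⟩. -/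
def gradLam {n N : ℕ} (η : ℝ) (C : Fin N → Mat n) (f g : Fin n → ℝ)
    (lam : Fin N → ℝ) : Fin N → ℝ :=
  fun k => frob (piMat η C f g lam k) (C k)

/-- `p` is the Euclidean projection of `x` onto the probability simplex. -/
def IsProjSimplex {m : ℕ} (p x : Fin m → ℝ) : Prop :=
  p ∈ stdSimplex ℝ (Fin m) ∧
    ∀ q ∈ stdSimplex ℝ (Fin m),
      vnorm2 (fun k => p k - x k) ≤ vnorm2 (fun k => q k - x k)

/-- Kullback–Leibler divergence KL(v‖w) = Σ_j v_j log(v_j / w_j). -/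
def klVec {m : ℕ} (v w : Fin m → ℝ) : ℝ := ∑ j, v j * Real.log (v j / w j)

/-- The Hamiltonian E(f,g,λ¹,λ²) = F(f,g,λ¹) − (1/(2τ))‖λ¹ − λ²‖₂². -/
def ham {n N : ℕ} (η : ℝ) (C : Fin N → Mat n) (a b : Fin n → ℝ) (τ : ℝ)
    (f g : Fin n → ℝ) (l1 l2 : Fin N → ℝ) : ℝ :=
  Fdual η C a b f g l1 - 1 / (2 * τ) * vnorm2 (fun k => l1 k - l2 k) ^ 2

/-- The rounding procedure Round(A, a, b). -/
def roundMat {n : ℕ} (A : Mat n) (a b : Fin n → ℝ) : Mat n :=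
  let x : Fin n → ℝ := fun i => min (a i / rowSum A i) 1
  let A' : Mat n := fun i j => x i * A i j
  let y : Fin n → ℝ := fun j => min (b j / colSum A' j) 1
  let A'' : Mat n := fun i j => A' i j * y j
  let erra : Fin n → ℝ := fun i => a i - rowSum A'' i
  let errb : Fin n → ℝ := fun j => b j - colSum A'' j
  fun i j => A'' i j + if vnorm1 erra = 0 then 0 else erra i * errb j / vnorm1 erra

/-- The coupling decomposition set Π_{a,b}^N. -/
def coupling {n N : ℕ} (a b : Fin n → ℝ) : Set (Fin N → Mat n) :=
  {P | (∀ k i j, 0 ≤ P k i j) ∧ rowSum (∑ k, P k) = a ∧ colSum (∑ k, P k) = b}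

/-- ℓ(π, λ) = Σ_k λ_k ⟨π^k, C^k⟩. -/
def ell {n N : ℕ} (C : Fin N → Mat n) (P : Fin N → Mat n) (lam : Fin N → ℝ) : ℝ :=
  ∑ k, lam k * frob (P k) (C k)

/-- (P, λ) is an ε-optimal solution of the EOT problem (duality-gap ≤ ε). -/
def epsOptimal {n N : ℕ} (C : Fin N → Mat n) (a b : Fin n → ℝ)
    (P : Fin N → Mat n) (lam : Fin N → ℝ) (ε : ℝ) : Prop :=
  P ∈ coupling (N := N) a b ∧ lam ∈ stdSimplex ℝ (Fin N) ∧
    ∀ μ ∈ stdSimplex ℝ (Fin N), ∀ Q ∈ coupling (N := N) a b,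
      ell C P μ - ell C Q lam ≤ ε

/-- The defining properties of the Margins procedure output (a^k, b^k). -/
def MarginsProp {n N : ℕ} (P : Fin N → Mat n) (b : Fin n → ℝ)
    (ak bk : Fin N → Fin n → ℝ) : Prop :=
  (∀ k, ak k = rowSum (P k)) ∧
  (∀ k j, 0 ≤ bk k j) ∧
  (∀ j, ∑ k, bk k j = b j) ∧
  (∀ k, ∑ j, bk k j = ∑ i, ak k i) ∧
  (∀ j k k', 0 ≤ (bk k j - colSum (P k) j) * (bk k' j - colSum (P k') j))


/-!
In `λ`, `F(λ') - F(μ) = -η log 𝔼_{π(μ)} exp s` with `s_{kij} = (μ_k - λ'_k) C^k_{ij} / η`, and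
`𝔼_{π(μ)} s` is `-∇F(μ) · (λ' - μ) / η`. Jensen's inequality therefore makes `F` concave, and
Hoeffding's lemma, with `|s| ≤ c_∞ ‖λ' - μ‖ / η`, bounds it below by its tangent minus
`c_∞² / (2η) ‖λ' - μ‖² = 1/(4τ) ‖λ' - μ‖²`. Testing the variational inequality of the projection
`λ⁺ = Proj(y + τ ∇F(y))` at `λ = λ^t` and combining it with these two bounds at `y` gives
`F(λ⁺) - F(λ) ≥ 1/(4τ) ‖λ⁺ - y‖² + 1/(2τ) (‖λ⁺ - λ‖² - ‖y - λ‖²)`, while the projection defining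
`y` is nonexpansive towards `λ ∈ Δ^N`, so `‖y - λ‖ ≤ (1 - θ) ‖λ - λ^{t-1}‖`.
-/

open Real MeasureTheory ProbabilityTheory

theorem vnorm2_sq {m : ℕ} (v : Fin m → ℝ) : vnorm2 v ^ 2 = v ⬝ᵥ v := by
  rw [vnorm2, sq_sqrt (Finset.sum_nonneg fun i _ => sq_nonneg _)]
  simp [dotProduct, sq]

theorem vnorm2_eq_norm {m : ℕ} (v : Fin m → ℝ) :
    vnorm2 v = ‖(WithLp.toLp 2 v : EuclideanSpace ℝ (Fin m))‖ := by
  simp [vnorm2, EuclideanSpace.norm_eq]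

theorem vnorm2_smul_sq {m : ℕ} (c : ℝ) (v : Fin m → ℝ) :
    vnorm2 (c • v) ^ 2 = c ^ 2 * vnorm2 v ^ 2 := by
  rw [vnorm2_sq, vnorm2_sq, smul_dotProduct, dotProduct_smul, smul_eq_mul, smul_eq_mul]
  ring

theorem abs_le_vnorm2 {m : ℕ} (v : Fin m → ℝ) (k : Fin m) : |v k| ≤ vnorm2 v :=
  abs_le_sqrt (Finset.single_le_sum (f := fun k => v k ^ 2) (fun _ _ => sq_nonneg _)
    (Finset.mem_univ k))

theorem two_mul_dotProduct_sub_sub {m : ℕ} (u v w : Fin m → ℝ) :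
    2 * ((u - w) ⬝ᵥ (v - w)) = vnorm2 (w - u) ^ 2 + vnorm2 (w - v) ^ 2 - vnorm2 (u - v) ^ 2 := by
  simp only [vnorm2_sq, dotProduct_sub, dotProduct_comm]
  ring

theorem const_inv_mem_stdSimplex {N : ℕ} (hN : 0 < N) :
    (fun _ => (N : ℝ)⁻¹) ∈ stdSimplex ℝ (Fin N) :=
  ⟨fun _ => by positivity, by simp [Finset.card_univ, hN.ne']⟩

theorem IsProjSimplex.dotProduct_sub_nonpos {m : ℕ} {p x q : Fin m → ℝ} (h : IsProjSimplex p x)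
    (hq : q ∈ stdSimplex ℝ (Fin m)) : (x - p) ⬝ᵥ (q - p) ≤ 0 := by
  let K : Set (EuclideanSpace ℝ (Fin m)) := WithLp.ofLp ⁻¹' stdSimplex ℝ (Fin m)
  have hK : Convex ℝ K := by
    have := (convex_stdSimplex ℝ (Fin m)).linear_preimage
      (WithLp.linearEquiv 2 ℝ (Fin m → ℝ)).toLinearMap
    rwa [LinearEquiv.coe_coe, WithLp.coe_linearEquiv] at this
  have hpK : WithLp.toLp 2 p ∈ K := h.1
  have hmin : ‖WithLp.toLp 2 x - WithLp.toLp 2 p‖ = ⨅ w : K, ‖WithLp.toLp 2 x - w‖ := by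
    have : Nonempty K := ⟨⟨_, hpK⟩⟩
    apply le_antisymm
    · refine le_ciInf fun w => ?_
      have : vnorm2 (p - x) ≤ vnorm2 (WithLp.ofLp w.1 - x) := h.2 _ w.2
      rwa [vnorm2_eq_norm, vnorm2_eq_norm, WithLp.toLp_sub, WithLp.toLp_sub, WithLp.toLp_ofLp,
        norm_sub_rev, norm_sub_rev w.1] at this
    · exact ciInf_le ⟨0, Set.forall_mem_range.2 fun w => norm_nonneg _⟩ (⟨_, hpK⟩ : K)
  have := (norm_eq_iInf_iff_real_inner_le_zero hK hpK).1 hmin (WithLp.toLp 2 q) hq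
  rwa [← WithLp.toLp_sub, ← WithLp.toLp_sub, EuclideanSpace.inner_toLp_toLp, star_trivial,
    dotProduct_comm] at this

theorem IsProjSimplex.vnorm2_sub_sq_le {m : ℕ} {p x q : Fin m → ℝ} (h : IsProjSimplex p x)
    (hq : q ∈ stdSimplex ℝ (Fin m)) : vnorm2 (p - q) ^ 2 ≤ vnorm2 (x - q) ^ 2 := by
  linarith [h.dotProduct_sub_nonpos hq, two_mul_dotProduct_sub_sub x q p,
    sq_nonneg (vnorm2 (p - x))]

theorem IsProjSimplex.gradient_step_increase {m : ℕ} {F : (Fin m → ℝ) → ℝ}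
    {G y l l' : Fin m → ℝ} {τ κ : ℝ} (hτ : 0 < τ)
    (hstep : IsProjSimplex l' (y + τ • G)) (hl : l ∈ stdSimplex ℝ (Fin m))
    (hconc : F l ≤ F y + G ⬝ᵥ (l - y))
    (hsmooth : F y + G ⬝ᵥ (l' - y) - κ * vnorm2 (l' - y) ^ 2 ≤ F l') :
    (1 / (2 * τ) - κ) * vnorm2 (l' - y) ^ 2 + 1 / (2 * τ) * vnorm2 (l' - l) ^ 2
      - 1 / (2 * τ) * vnorm2 (y - l) ^ 2 ≤ F l' - F l := by
  have hvi := hstep.dotProduct_sub_nonpos hl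
  rw [add_sub_right_comm, add_dotProduct, smul_dotProduct, smul_eq_mul] at hvi
  have hG : 1 / (2 * τ) * (vnorm2 (l' - y) ^ 2 + vnorm2 (l' - l) ^ 2 - vnorm2 (y - l) ^ 2)
      ≤ G ⬝ᵥ (l' - l) := by
    rw [one_div_mul_eq_div, div_le_iff₀ (by positivity), ← two_mul_dotProduct_sub_sub,
      ← neg_sub l, dotProduct_neg]
    linarith
  have hsplit : G ⬝ᵥ (l' - l) = G ⬝ᵥ (l' - y) - G ⬝ᵥ (l - y) := by
    rw [← dotProduct_sub, sub_sub_sub_cancel_right]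
  linarith

theorem exp_sum_mul_le_sum_mul_exp {ι : Type*} [Fintype ι] {p : ι → ℝ} (hp : ∀ i, 0 ≤ p i)
    (hp1 : ∑ i, p i = 1) (s : ι → ℝ) :
    exp (∑ i, p i * s i) ≤ ∑ i, p i * exp (s i) := by
  simpa using convexOn_exp.map_sum_le (t := Finset.univ) (p := s) (fun i _ => hp i) hp1
    (fun i _ => Set.mem_univ _)

theorem sum_mul_le_log_sum_mul_exp {ι : Type*} [Fintype ι] {p : ι → ℝ} (hp : ∀ i, 0 ≤ p i)
    (hp1 : ∑ i, p i = 1) (s : ι → ℝ) :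
    ∑ i, p i * s i ≤ log (∑ i, p i * exp (s i)) :=
  (le_log_iff_exp_le ((exp_pos _).trans_le (exp_sum_mul_le_sum_mul_exp hp hp1 s))).2
    (exp_sum_mul_le_sum_mul_exp hp hp1 s)

/-- Hoeffding's lemma for the finite law `p`: `(2M)² / 8 = M² / 2`. -/
theorem log_sum_mul_exp_le {ι : Type*} [Fintype ι] {p s : ι → ℝ} (hp : ∀ i, 0 ≤ p i)
    (hp1 : ∑ i, p i = 1) {M : ℝ} (hs : ∀ i, |s i| ≤ M) :
    log (∑ i, p i * exp (s i)) ≤ ∑ i, p i * s i + M ^ 2 / 2 := by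
  let _ : MeasurableSpace ι := ⊤
  let P : PMF ι := PMF.ofFintype (fun i => ENNReal.ofReal (p i)) (by
    rw [← ENNReal.ofReal_sum_of_nonneg fun i _ => hp i, hp1, ENNReal.ofReal_one])
  have hP (φ : ι → ℝ) : ∫ i, φ i ∂P.toMeasure = ∑ i, p i * φ i := by
    simp [P, PMF.integral_eq_sum, ENNReal.toReal_ofReal (hp _)]
  have hoeffding := (hasSubgaussianMGF_of_mem_Icc (μ := P.toMeasure) (X := s) (a := -M) (b := M)
    (measurable_of_countable s).aemeasurable (ae_of_all _ fun i => abs_le.mp (hs i))).mgf_le 1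
  have hM : (((‖M - -M‖₊ / 2) ^ 2 : NNReal) : ℝ) = M ^ 2 := by simp [← two_mul]
  have hcenter : ∑ i, p i * exp (1 * (s i - ∑ j, p j * s j))
      = (∑ i, p i * exp (s i)) * exp (-∑ j, p j * s j) := by
    simp only [one_mul, sub_eq_add_neg, exp_add, Finset.sum_mul, mul_assoc]
  rw [mgf, hP, hP, hM, hcenter, ← le_div_iff₀ (exp_pos _), ← exp_sub,
    ← log_le_iff_le_exp ((exp_pos _).trans_le (exp_sum_mul_le_sum_mul_exp hp hp1 s))] at hoeffding
  linarith

theorem abs_le_cinf {n N : ℕ} (C : Fin N → Mat n) (k : Fin N) (i j : Fin n) :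
    |C k i j| ≤ cinf C :=
  (le_ciSup (Finite.bddAbove_range fun j => |C k i j|) j).trans <|
    (le_ciSup (Finite.bddAbove_range fun i => ⨆ j, |C k i j|) i).trans <|
      le_ciSup (Finite.bddAbove_range fun k => ⨆ i, ⨆ j, |C k i j|) k

section Dual

variable {n N : ℕ} {η : ℝ} (C : Fin N → Mat n) (f g : Fin n → ℝ)

theorem mnorm1_zeta (lam : Fin N → ℝ) (k : Fin N) :
    mnorm1 (zeta η C f g lam k) = ∑ i, ∑ j, zeta η C f g lam k i j := by
  simp only [mnorm1, zeta, abs_exp]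

theorem sum_mnorm1_zeta_pos (hn : 0 < n) (hN : 0 < N) (lam : Fin N → ℝ) :
    0 < ∑ k, mnorm1 (zeta η C f g lam k) := by
  have := Fin.pos_iff_nonempty.1 hn
  have := Fin.pos_iff_nonempty.1 hN
  simp only [mnorm1_zeta]
  exact Finset.sum_pos (fun k _ => Finset.sum_pos (fun i _ => Finset.sum_pos
    (fun j _ => exp_pos _) Finset.univ_nonempty) Finset.univ_nonempty) Finset.univ_nonempty

theorem piMat_nonneg (lam : Fin N → ℝ) (k : Fin N) (i j : Fin n) :
    0 ≤ piMat η C f g lam k i j :=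
  div_nonneg (exp_pos _).le <| Finset.sum_nonneg fun _ _ =>
    Finset.sum_nonneg fun _ _ => Finset.sum_nonneg fun _ _ => abs_nonneg _

theorem sum_piMat (hn : 0 < n) (hN : 0 < N) (lam : Fin N → ℝ) :
    ∑ k, ∑ i, ∑ j, piMat η C f g lam k i j = 1 := by
  simp only [piMat, ← Finset.sum_div, ← mnorm1_zeta]
  exact div_self (sum_mnorm1_zeta_pos C f g hn hN lam).ne'

theorem sum_piMat_mul_exp (μ lam : Fin N → ℝ) :
    ∑ k, ∑ i, ∑ j, piMat η C f g μ k i j * exp ((μ k - lam k) * C k i j / η)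
      = (∑ k, mnorm1 (zeta η C f g lam k)) / ∑ k, mnorm1 (zeta η C f g μ k) := by
  have hzeta (k i j) : zeta η C f g μ k i j * exp ((μ k - lam k) * C k i j / η)
      = zeta η C f g lam k i j := by
    rw [zeta, zeta, ← exp_add, ← add_div]
    ring_nf
  simp only [piMat, div_mul_eq_mul_div, hzeta, ← Finset.sum_div, ← mnorm1_zeta]

theorem Fdual_sub_Fdual (a b : Fin n → ℝ) (hn : 0 < n) (hN : 0 < N) (μ lam : Fin N → ℝ) :
    Fdual η C a b f g lam - Fdual η C a b f g μ
      = -η * log (∑ k, ∑ i, ∑ j, piMat η C f g μ k i j * exp ((μ k - lam k) * C k i j / η)) := by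
  rw [sum_piMat_mul_exp, log_div (sum_mnorm1_zeta_pos C f g hn hN lam).ne'
    (sum_mnorm1_zeta_pos C f g hn hN μ).ne', Fdual, Fdual]
  ring

theorem gradLam_dotProduct_sub (hη : η ≠ 0) (μ lam : Fin N → ℝ) :
    gradLam η C f g μ ⬝ᵥ (lam - μ)
      = -η * ∑ k, ∑ i, ∑ j, piMat η C f g μ k i j * ((μ k - lam k) * C k i j / η) := by
  simp only [dotProduct, gradLam, frob, Finset.mul_sum, Finset.sum_mul, Pi.sub_apply]
  refine Fintype.sum_congr _ _ fun k => Fintype.sum_congr _ _ fun i =>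
    Fintype.sum_congr _ _ fun j => ?_
  field_simp
  ring

theorem Fdual_le_add_gradLam (a b : Fin n → ℝ) (hn : 0 < n) (hN : 0 < N) (hη : 0 < η)
    (μ lam : Fin N → ℝ) :
    Fdual η C a b f g lam ≤ Fdual η C a b f g μ + gradLam η C f g μ ⬝ᵥ (lam - μ) := by
  have jensen := sum_mul_le_log_sum_mul_exp
    (p := fun x : Fin N × Fin n × Fin n => piMat η C f g μ x.1 x.2.1 x.2.2)
    (fun _ => piMat_nonneg C f g μ _ _ _)
    (by simpa only [Fintype.sum_prod_type] using sum_piMat C f g hn hN μ)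
    (fun x => (μ x.1 - lam x.1) * C x.1 x.2.1 x.2.2 / η)
  simp only [Fintype.sum_prod_type] at jensen
  have := mul_le_mul_of_nonneg_left jensen hη.le
  linarith [Fdual_sub_Fdual (η := η) C f g a b hn hN μ lam,
    gradLam_dotProduct_sub C f g hη.ne' μ lam]

theorem add_gradLam_sub_le_Fdual (a b : Fin n → ℝ) (hn : 0 < n) (hN : 0 < N) (hη : 0 < η)
    (μ lam : Fin N → ℝ) :
    Fdual η C a b f g μ + gradLam η C f g μ ⬝ᵥ (lam - μ)
      - cinf C ^ 2 / (2 * η) * vnorm2 (lam - μ) ^ 2 ≤ Fdual η C a b f g lam := by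
  have hs (x : Fin N × Fin n × Fin n) :
      |(μ x.1 - lam x.1) * C x.1 x.2.1 x.2.2 / η| ≤ cinf C * vnorm2 (lam - μ) / η := by
    rw [abs_div, abs_mul, abs_of_pos hη, abs_sub_comm, mul_comm (cinf C)]
    exact div_le_div_of_nonneg_right (mul_le_mul (abs_le_vnorm2 (lam - μ) x.1)
      (abs_le_cinf C _ _ _) (abs_nonneg _) (sqrt_nonneg _)) hη.le
  have hoeffding := log_sum_mul_exp_le
    (p := fun x : Fin N × Fin n × Fin n => piMat η C f g μ x.1 x.2.1 x.2.2)
    (fun _ => piMat_nonneg C f g μ _ _ _)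
    (by simpa only [Fintype.sum_prod_type] using sum_piMat C f g hn hN μ) hs
  simp only [Fintype.sum_prod_type] at hoeffding
  have := mul_le_mul_of_nonneg_left hoeffding hη.le
  have hM : η * ((cinf C * vnorm2 (lam - μ) / η) ^ 2 / 2)
      = cinf C ^ 2 / (2 * η) * vnorm2 (lam - μ) ^ 2 := by
    field_simp
  linarith [Fdual_sub_Fdual (η := η) C f g a b hn hN μ lam,
    gradLam_dotProduct_sub C f g hη.ne' μ lam]

end Dual

theorem pame_hamiltonian_increase_general
    {n N : ℕ} (hn : 0 < n) (hN : 0 < N)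
    (C : Fin N → Mat n) (a b : Fin n → ℝ)
    (η : ℝ) (hη : 0 < η) (hc : 0 < cinf C)
    (θ : ℝ) (hθ0 : 0 < θ) (hθ1 : θ < 1)
    (τ : ℝ) (hτ : τ = η / (2 * cinf C ^ 2))
    (f g : ℕ → Fin n → ℝ) (lam y : ℕ → Fin N → ℝ)
    (hlam0 : lam 0 = fun _ => (N : ℝ)⁻¹)
    (hystep : ∀ t, IsProjSimplex (y (t + 1))
      (fun k => lam t k + (1 - θ) * (lam t k - lam (t - 1) k)))
    (hlamstep : ∀ t, IsProjSimplex (lam (t + 1))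
      (fun k => y (t + 1) k + τ * gradLam η C (f (t + 1)) (g (t + 1)) (y (t + 1)) k)) :
    ∀ t : ℕ,
      (2 * θ - θ ^ 2) / (2 * τ) * vnorm2 (fun k => lam t k - lam (t - 1) k) ^ 2
          + 1 / (4 * τ) * vnorm2 (fun k => lam (t + 1) k - y (t + 1) k) ^ 2
        ≤ ham η C a b τ (f (t + 1)) (g (t + 1)) (lam (t + 1)) (lam t)
          - ham η C a b τ (f (t + 1)) (g (t + 1)) (lam t) (lam (t - 1)) ∧
      0 ≤ (2 * θ - θ ^ 2) / (2 * τ) * vnorm2 (fun k => lam t k - lam (t - 1) k) ^ 2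
          + 1 / (4 * τ) * vnorm2 (fun k => lam (t + 1) k - y (t + 1) k) ^ 2 := by
  intro t
  have hτ0 : 0 < τ := hτ ▸ by positivity
  have hlam_mem : ∀ u, lam u ∈ stdSimplex ℝ (Fin N)
    | 0 => hlam0 ▸ const_inv_mem_stdSimplex hN
    | u + 1 => (hlamstep u).1
  have hκ : cinf C ^ 2 / (2 * η) = 1 / (4 * τ) := by
    rw [hτ]
    field_simp
    ring
  have hincrease := (hlamstep t).gradient_step_increase
    (F := Fdual η C a b (f (t + 1)) (g (t + 1)))
    (y := y (t + 1)) (G := gradLam η C (f (t + 1)) (g (t + 1)) (y (t + 1))) hτ0 (hlam_mem t)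
    (Fdual_le_add_gradLam C _ _ a b hn hN hη _ _)
    (add_gradLam_sub_le_Fdual C _ _ a b hn hN hη _ _)
  rw [hκ] at hincrease
  have hextrapolate :
      vnorm2 (y (t + 1) - lam t) ^ 2 ≤ (1 - θ) ^ 2 * vnorm2 (lam t - lam (t - 1)) ^ 2 := by
    have hx : (fun k => lam t k + (1 - θ) * (lam t k - lam (t - 1) k)) - lam t
        = (1 - θ) • (lam t - lam (t - 1)) := by
      funext k
      simp only [Pi.sub_apply, Pi.smul_apply, smul_eq_mul]
      ring
    have := (hystep t).vnorm2_sub_sq_le (hlam_mem t)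
    rwa [hx, vnorm2_smul_sq] at this
  have hθ : 0 ≤ 2 * θ - θ ^ 2 := by nlinarith
  simp only [ham, ← Pi.sub_def]
  constructor
  · linear_combination hincrease + 1 / (2 * τ) * hextrapolate
  · positivity

/-- sufficient increase of the Hamiltonian in λ along PAME. -/
theorem pame_hamiltonian_increase
    {n N : ℕ} (hn : 0 < n) (hN : 0 < N)
    (C : Fin N → Mat n) (a b : Fin n → ℝ)
    (ha : a ∈ stdSimplex ℝ (Fin n)) (hb : b ∈ stdSimplex ℝ (Fin n))
    (ha' : ∀ i, 0 < a i) (hb' : ∀ j, 0 < b j)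
    (η : ℝ) (hη : 0 < η) (hc : 0 < cinf C)
    (θ : ℝ) (hθ0 : 0 < θ) (hθ1 : θ < 1)
    (τ : ℝ) (hτ : τ = η / (2 * cinf C ^ 2))
    (f g : ℕ → Fin n → ℝ) (lam y : ℕ → Fin N → ℝ)
    (hf0 : f 0 = fun _ => 1) (hg0 : g 0 = fun _ => 1)
    (hlam0 : lam 0 = fun _ => (N : ℝ)⁻¹)
    (hfstep : ∀ t, f (t + 1) = fun i =>
      f t i + η * Real.log (a i / rowSum (∑ k, zeta η C (f t) (g t) (lam t) k) i))
    (hgstep : ∀ t, g (t + 1) = fun j =>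
      g t j + η * Real.log (b j / colSum (∑ k, zeta η C (f (t + 1)) (g t) (lam t) k) j))
    (hystep : ∀ t, IsProjSimplex (y (t + 1))
      (fun k => lam t k + (1 - θ) * (lam t k - lam (t - 1) k)))
    (hlamstep : ∀ t, IsProjSimplex (lam (t + 1))
      (fun k => y (t + 1) k + τ * gradLam η C (f (t + 1)) (g (t + 1)) (y (t + 1)) k)) :
    ∀ t : ℕ,
      (2 * θ - θ ^ 2) / (2 * τ) * vnorm2 (fun k => lam t k - lam (t - 1) k) ^ 2
          + 1 / (4 * τ) * vnorm2 (fun k => lam (t + 1) k - y (t + 1) k) ^ 2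
        ≤ ham η C a b τ (f (t + 1)) (g (t + 1)) (lam (t + 1)) (lam t)
          - ham η C a b τ (f (t + 1)) (g (t + 1)) (lam t) (lam (t - 1)) ∧
      0 ≤ (2 * θ - θ ^ 2) / (2 * τ) * vnorm2 (fun k => lam t k - lam (t - 1) k) ^ 2
          + 1 / (4 * τ) * vnorm2 (fun k => lam (t + 1) k - y (t + 1) k) ^ 2 :=
  pame_hamiltonian_increase_general hn hN C a b η hη hc θ hθ0 hθ1 τ hτ f g lam y hlam0 hystep
    hlamstep

end EOT

end
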